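/- Under both the overlap preference model and the cost preference model, no pair ⟨R, F⟩ consisting of a non-wasteful shortlisting rule R and an exhaustive allocation rule F is R-FSSP with respect to anticipative manipulation (R-FSSP-A). -/

import Mathlib

open Finset

namespace PB

open scoped Classical

/-- An approval/shortlisting profile for `n` agents: each agent contributes a
finite set of (indices of) projects. Projects are identified with their indices. -/
abbrev Profile (n : ℕ) := Fin n → Finset ℕ

/-- The union `⋃ P` of all proposals in a profile. -/
def unionP {n : ℕ} (P : Profile n) : Finset ℕ := Finset.univ.sup P

/-- Encoding of a finite set of projects; a set is lexicographically preferred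
(amongst the projects on which two sets differ, the one with the lowest index
belongs to the preferred set) iff its encoding is larger. -/
noncomputable def enc (P : Finset ℕ) : ℚ := P.sum fun i => (1 / 2 : ℚ) ^ i

/-- The canonical tie-breaking rule `T` on a family of sets of projects:
the (unique) lexicographically first set of the family. -/
noncomputable def Tfam (𝔓 : Finset (Finset ℕ)) : Finset ℕ :=
  if h : ∃ P ∈ 𝔓, ∀ Q ∈ 𝔓, enc Q ≤ enc P then h.choose else ∅

/-- The `r`-least element of a finite set of projects (`r` read as "strictly before"). -/
noncomputable def first (r : ℕ → ℕ → Prop) (P : Finset ℕ) : ℕ :=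
  if h : ∃ p ∈ P, ∀ q ∈ P, q ≠ p → r p q then h.choose else 0

/-- The canonical tie-breaking rule `T` on a nonempty set of projects: least index. -/
noncomputable def Tproj (P : Finset ℕ) : ℕ := first (· < ·) P

noncomputable def greedyAux (c : ℕ → ℕ) (r : ℕ → ℕ → Prop) : ℕ → Finset ℕ → ℕ → Finset ℕ
  | 0, _, _ => ∅
  | fuel + 1, P, b =>
    if P.Nonempty then
      if c (first r P) ≤ b then
        insert (first r P) (greedyAux c r fuel (P.erase (first r P)) (b - c (first r P)))
      else greedyAux c r fuel (P.erase (first r P)) b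
    else ∅

/-- Greedy selection: examine the projects of `P` following the strict order `r`,
selecting a project iff doing so keeps the total cost within the budget `B`. -/
noncomputable def GREED (c : ℕ → ℕ) (B : ℕ) (P : Finset ℕ) (r : ℕ → ℕ → Prop) : Finset ℕ :=
  greedyAux c r P.card P B

/-- A shortlisting rule: for every number `n` of agents, cost function, budget
limit, universe `ℙ` of projects and shortlisting profile, a shortlist. -/
abbrev ShortRule := ∀ n : ℕ, (ℕ → ℕ) → ℕ → Finset ℕ → Profile n → Finset ℕ

/-- An allocation rule: for every number `n` of agents, cost function, budget
limit, set `Sh` of shortlisted projects and approval profile, a budget allocation. -/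
abbrev AllocRule := ∀ n : ℕ, (ℕ → ℕ) → ℕ → Finset ℕ → Profile n → Finset ℕ

/-- A shortlisting rule must return a subset of the union of the proposals. -/
def IsShortRule (R : ShortRule) : Prop :=
  ∀ (n : ℕ) (c : ℕ → ℕ) (B : ℕ) (ℙ : Finset ℕ) (P : Profile n),
    (∀ j, P j ⊆ ℙ) → R n c B ℙ P ⊆ unionP P

/-- An allocation rule must return a feasible budget allocation. -/
def IsAllocRule (F : AllocRule) : Prop :=
  ∀ (n : ℕ) (c : ℕ → ℕ) (B : ℕ) (Sh : Finset ℕ) (A : Profile n),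
    (∀ j, A j ⊆ Sh) → F n c B Sh A ⊆ Sh ∧ (F n c B Sh A).sum c ≤ B

/-- The nomination shortlisting rule. -/
def nomination : ShortRule := fun _ _ _ _ P => unionP P

/-- Non-wastefulness of a shortlisting rule. -/
def NonWasteful (R : ShortRule) : Prop :=
  ∀ (n : ℕ) (c : ℕ → ℕ) (B : ℕ) (ℙ : Finset ℕ) (P : Profile n),
    (∀ p ∈ ℙ, c p ≤ B) → (∀ j, P j ⊆ ℙ) →
    B ≤ (R n c B ℙ P).sum c ∨ R n c B ℙ P = unionP P

/-- A shortlist `S` is representatively dominated (given instance and profile). -/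
def RepDominated {n : ℕ} (c : ℕ → ℕ) (ℙ : Finset ℕ) (P : Profile n) (S : Finset ℕ) : Prop :=
  ∃ S' ⊆ ℙ, S'.sum c ≤ S.sum c ∧
    (∀ i, (S ∩ P i).card ≤ (S' ∩ P i).card) ∧ ∃ i, (S ∩ P i).card < (S' ∩ P i).card

/-- Representation efficiency of a shortlisting rule. -/
def RepEfficient (R : ShortRule) : Prop :=
  ∀ (n : ℕ) (c : ℕ → ℕ) (B : ℕ) (ℙ : Finset ℕ) (P : Profile n),
    (∀ p ∈ ℙ, c p ≤ B) → (∀ j, P j ⊆ ℙ) →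
    ¬ RepDominated c ℙ P (R n c B ℙ P)

/-- The representation score `Σ_i Σ_{ℓ=0}^{|P_i ∩ S|} (1/n)^ℓ`. -/
noncomputable def reprScore (n : ℕ) (P : Profile n) (S : Finset ℕ) : ℚ :=
  ∑ i, ∑ l ∈ Finset.range ((P i ∩ S).card + 1), (1 / (n : ℚ)) ^ l

/-- The `k`-equal-representation shortlisting rule. -/
noncomputable def equalRepr (k : ℕ) : ShortRule := fun n c B _ P =>
  Tfam (((unionP P).powerset).filter fun S =>
    S.sum c ≤ k * B ∧
    ∀ S' ∈ (unionP P).powerset, S'.sum c ≤ k * B → reprScore n P S' ≤ reprScore n P S)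

/-- The geometric median of a set of projects w.r.t. a distance `δ`. -/
noncomputable def med (δ : ℕ → ℕ → ℝ) (V : Finset ℕ) : ℕ :=
  Tproj (V.filter fun p => ∀ q ∈ V, V.sum (fun x => δ p x) ≤ V.sum (fun x => δ q x))

def IsPartition (V : Finset (Finset ℕ)) (P : Finset ℕ) : Prop :=
  (∀ v ∈ V, v.Nonempty) ∧ V.sup id = P ∧ ∀ v ∈ V, ∀ w ∈ V, v ≠ w → Disjoint v w

/-- `(k, ℓ)`-Voronoï partitions w.r.t. `δ`. -/
def IsVoronoi (δ : ℕ → ℕ → ℝ) (c : ℕ → ℕ) (B k : ℕ) (ℓ : ℝ)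
    (V : Finset (Finset ℕ)) (P : Finset ℕ) : Prop :=
  IsPartition V P ∧ (V.sum fun v => c (med δ v)) ≤ k * B ∧
  ∀ v ∈ V, ∀ p ∈ v,
    (∀ w ∈ V, w ≠ v → δ p (med δ v) ≤ δ p (med δ w)) ∧ δ p (med δ v) ≤ ℓ

/-- The smallest `ℓ` such that a `(k, ℓ)`-Voronoï partition of `P` exists. -/
noncomputable def lstar (δ : ℕ → ℕ → ℝ) (c : ℕ → ℕ) (B k : ℕ) (P : Finset ℕ) : ℝ :=
  sInf {ℓ : ℝ | ∃ V : Finset (Finset ℕ), IsVoronoi δ c B k ℓ V P}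

/-- The `k`-median shortlisting rule w.r.t. the distance `δ`. -/
noncomputable def kMedian (δ : ℕ → ℕ → ℝ) (k : ℕ) : ShortRule := fun _ c B _ P =>
  Tfam ((((unionP P).powerset.powerset).filter fun V =>
    IsVoronoi δ c B k (lstar δ c B k (unionP P)) V (unionP P)).image fun V => V.image (med δ))

/-- `δ` is a metric (on the universe of conceivable projects). -/
def IsMetric (δ : ℕ → ℕ → ℝ) : Prop :=
  (∀ p q, δ p q = 0 ↔ p = q) ∧ (∀ p q, δ p q = δ q p) ∧ ∀ p q r, δ p r ≤ δ p q + δ q r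

/-- The approval score of project `p` in profile `A`. -/
def appScore {n : ℕ} (A : Profile n) (p : ℕ) : ℕ :=
  (Finset.univ.filter fun i => p ∈ A i).card

/-- The greedy-approval allocation rule. -/
noncomputable def greedyApproval : AllocRule := fun _ c B Sh A =>
  GREED c B Sh fun p q => appScore A q < appScore A p ∨ (appScore A p = appScore A q ∧ p < q)

/-- The approval-maximising allocation rule (canonical tie-breaking). -/
noncomputable def approvalMax : AllocRule := fun _ c B Sh A =>
  Tfam ((Sh.powerset).filter fun S =>
    S.sum c ≤ B ∧ ∀ S' ∈ Sh.powerset, S'.sum c ≤ B → S'.sum (appScore A) ≤ S.sum (appScore A))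

/-- `A` is an exhaustive budget allocation for the instance `⟨Sh, c, B⟩`. -/
def ExhaustiveAlloc (c : ℕ → ℕ) (B : ℕ) (Sh A : Finset ℕ) : Prop :=
  A ⊆ Sh ∧ A.sum c ≤ B ∧ ∀ p ∈ Sh, p ∉ A → ¬ (A.sum c + c p ≤ B)

/-- An allocation rule is exhaustive if it always returns an exhaustive allocation. -/
def ExhaustiveRule (F : AllocRule) : Prop :=
  ∀ (n : ℕ) (c : ℕ → ℕ) (B : ℕ) (Sh : Finset ℕ) (A : Profile n),
    (∀ j, A j ⊆ Sh) → ExhaustiveAlloc c B Sh (F n c B Sh A)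

/-- Unanimity of an allocation rule. -/
def Unanimous (F : AllocRule) : Prop :=
  ∀ (n : ℕ) (c : ℕ → ℕ) (B : ℕ) (Sh : Finset ℕ) (a : Finset ℕ),
    a ⊆ Sh → a.sum c ≤ B → a ⊆ F n c B Sh (fun _ => a)

/-- Strong unanimity of an allocation rule. -/
def StronglyUnanimous (F : AllocRule) : Prop :=
  ∀ (n : ℕ) (c : ℕ → ℕ) (B : ℕ) (Sh : Finset ℕ) (i : Fin n) (a : Finset ℕ) (A : Profile n),
    3 ≤ n → a ⊆ Sh → a.sum c ≤ B → (∀ j, j ≠ i → A j = a) → a ⊆ F n c B Sh A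

/-- A preference model: given the cost function and an ideal set, the utility
of a budget allocation.  `overlapU` and `costU` are the two models used. -/
abbrev PrefModel := (ℕ → ℕ) → Finset ℕ → Finset ℕ → ℕ

def overlapU : PrefModel := fun _ P A => (A ∩ P).card
def costU : PrefModel := fun c P A => (A ∩ P).sum c

/-- Budget allocations reachable by agent `i` by changing her own ballot. -/
noncomputable def reachable (n : ℕ) (c : ℕ → ℕ) (B : ℕ) (F : AllocRule)
    (Sh : Finset ℕ) (A : Profile n) (i : Fin n) : Finset (Finset ℕ) :=
  (Sh.powerset).image fun b => F n c B Sh (Function.update A i b)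

/-- The best response `A*_i(I, A, F)` of agent `i` (with preference order `r`). -/
noncomputable def Astar (U : PrefModel) (n : ℕ) (c : ℕ → ℕ) (B : ℕ) (F : AllocRule)
    (r : ℕ → ℕ → Prop) (Sh : Finset ℕ) (A : Profile n) (i : Fin n) : Finset ℕ :=
  Tfam ((reachable n c B F Sh A i).filter fun X =>
    ∀ Y ∈ reachable n c B F Sh A i, U c (GREED c B Sh r) Y ≤ U c (GREED c B Sh r) X)

/-- `F*(I, A)`: the outcome after agent `i` best-responds to profile `A`. -/
noncomputable def Fstar (U : PrefModel) (n : ℕ) (c : ℕ → ℕ) (B : ℕ) (F : AllocRule)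
    (r : ℕ → ℕ → Prop) (Sh : Finset ℕ) (A : Profile n) (i : Fin n) : Finset ℕ :=
  F n c B Sh (Function.update A i (Astar U n c B F r Sh A i))

/-- `Pi'` is a successful pessimistic manipulation for agent `i` (base profile `P`). -/
def SuccPess (U : PrefModel) (R : ShortRule) (F : AllocRule) (n : ℕ) (c : ℕ → ℕ) (B : ℕ)
    (ℙ : Finset ℕ) (prefs : Fin n → ℕ → ℕ → Prop) (P : Profile n) (i : Fin n)
    (Pi' : Finset ℕ) : Prop :=
  let Sh := R n c B ℙ P
  let Sh' := R n c B ℙ (Function.update P i Pi')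
  let tp := GREED c B (Sh ∪ Sh') (prefs i)
  (∀ A A' : Profile n, (∀ j, A j ⊆ Sh) → (∀ j, A' j ⊆ Sh') →
      U c tp (Fstar U n c B F (prefs i) Sh A i) ≤ U c tp (Fstar U n c B F (prefs i) Sh' A' i)) ∧
  ∃ A A' : Profile n, (∀ j, A j ⊆ Sh) ∧ (∀ j, A' j ⊆ Sh') ∧
      U c tp (Fstar U n c B F (prefs i) Sh A i) < U c tp (Fstar U n c B F (prefs i) Sh' A' i)

/-- `Pi'` is a successful optimistic manipulation for agent `i` (base profile `P`). -/
def SuccOpt (U : PrefModel) (R : ShortRule) (F : AllocRule) (n : ℕ) (c : ℕ → ℕ) (B : ℕ)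
    (ℙ : Finset ℕ) (prefs : Fin n → ℕ → ℕ → Prop) (P : Profile n) (i : Fin n)
    (Pi' : Finset ℕ) : Prop :=
  let Sh := R n c B ℙ P
  let Sh' := R n c B ℙ (Function.update P i Pi')
  let tp := GREED c B (Sh ∪ Sh') (prefs i)
  ∃ A A' : Profile n, (∀ j, A j ⊆ Sh) ∧ (∀ j, A' j ⊆ Sh') ∧
      U c tp (Fstar U n c B F (prefs i) Sh A i) < U c tp (Fstar U n c B F (prefs i) Sh' A' i)

/-- `Pi'` is a successful anticipative manipulation for agent `i` (base profile `P`). -/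
def SuccAnt (U : PrefModel) (R : ShortRule) (F : AllocRule) (n : ℕ) (c : ℕ → ℕ) (B : ℕ)
    (ℙ : Finset ℕ) (prefs : Fin n → ℕ → ℕ → Prop) (P : Profile n) (i : Fin n)
    (Pi' : Finset ℕ) : Prop :=
  let Sh := R n c B ℙ P
  let Sh' := R n c B ℙ (Function.update P i Pi')
  let tp := GREED c B (Sh ∪ Sh') (prefs i)
  U c tp (Fstar U n c B F (prefs i) Sh (fun j => GREED c B Sh (prefs j)) i)
    < U c tp (Fstar U n c B F (prefs i) Sh' (fun j => GREED c B Sh' (prefs j)) i)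

section FSSP

variable (U : PrefModel) (R : ShortRule) (F : AllocRule)

/-- First-stage strategyproofness, awareness-restricted, pessimistic. -/
def R_FSSP_P : Prop :=
  ∀ (n : ℕ) (c : ℕ → ℕ) (B : ℕ) (ℙ : Finset ℕ) (prefs : Fin n → ℕ → ℕ → Prop)
    (C P : Profile n) (i : Fin n) (Pi' : Finset ℕ),
    (∀ p ∈ ℙ, c p ≤ B) → (∀ j, IsStrictTotalOrder ℕ (prefs j)) →
    (∀ j, C j ⊆ ℙ) → (∀ j, P j ⊆ C j) → Pi' ⊆ C i →
    ¬ SuccPess U R F n c B ℙ prefs (Function.update P i (GREED c B (C i) (prefs i))) i Pi'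

/-- First-stage strategyproofness, awareness-restricted, optimistic. -/
def R_FSSP_O : Prop :=
  ∀ (n : ℕ) (c : ℕ → ℕ) (B : ℕ) (ℙ : Finset ℕ) (prefs : Fin n → ℕ → ℕ → Prop)
    (C P : Profile n) (i : Fin n) (Pi' : Finset ℕ),
    (∀ p ∈ ℙ, c p ≤ B) → (∀ j, IsStrictTotalOrder ℕ (prefs j)) →
    (∀ j, C j ⊆ ℙ) → (∀ j, P j ⊆ C j) → Pi' ⊆ C i →
    ¬ SuccOpt U R F n c B ℙ prefs (Function.update P i (GREED c B (C i) (prefs i))) i Pi'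

/-- First-stage strategyproofness, awareness-restricted, anticipative. -/
def R_FSSP_A : Prop :=
  ∀ (n : ℕ) (c : ℕ → ℕ) (B : ℕ) (ℙ : Finset ℕ) (prefs : Fin n → ℕ → ℕ → Prop)
    (C P : Profile n) (i : Fin n) (Pi' : Finset ℕ),
    (∀ p ∈ ℙ, c p ≤ B) → (∀ j, IsStrictTotalOrder ℕ (prefs j)) →
    (∀ j, C j ⊆ ℙ) → (∀ j, P j ⊆ C j) → Pi' ⊆ C i →
    ¬ SuccAnt U R F n c B ℙ prefs (Function.update P i (GREED c B (C i) (prefs i))) i Pi'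

/-- First-stage strategyproofness, unrestricted, pessimistic. -/
def U_FSSP_P : Prop :=
  ∀ (n : ℕ) (c : ℕ → ℕ) (B : ℕ) (ℙ : Finset ℕ) (prefs : Fin n → ℕ → ℕ → Prop)
    (C P : Profile n) (i : Fin n) (Pi' : Finset ℕ),
    (∀ p ∈ ℙ, c p ≤ B) → (∀ j, IsStrictTotalOrder ℕ (prefs j)) →
    (∀ j, C j ⊆ ℙ) → (∀ j, P j ⊆ C j) → Pi' ⊆ C i ∪ unionP P →
    ¬ SuccPess U R F n c B ℙ prefs
        (Function.update P i (GREED c B (C i ∪ unionP P) (prefs i))) i Pi'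

/-- First-stage strategyproofness, unrestricted, optimistic. -/
def U_FSSP_O : Prop :=
  ∀ (n : ℕ) (c : ℕ → ℕ) (B : ℕ) (ℙ : Finset ℕ) (prefs : Fin n → ℕ → ℕ → Prop)
    (C P : Profile n) (i : Fin n) (Pi' : Finset ℕ),
    (∀ p ∈ ℙ, c p ≤ B) → (∀ j, IsStrictTotalOrder ℕ (prefs j)) →
    (∀ j, C j ⊆ ℙ) → (∀ j, P j ⊆ C j) → Pi' ⊆ C i ∪ unionP P →
    ¬ SuccOpt U R F n c B ℙ prefs
        (Function.update P i (GREED c B (C i ∪ unionP P) (prefs i))) i Pi'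

/-- First-stage strategyproofness, unrestricted, anticipative. -/
def U_FSSP_A : Prop :=
  ∀ (n : ℕ) (c : ℕ → ℕ) (B : ℕ) (ℙ : Finset ℕ) (prefs : Fin n → ℕ → ℕ → Prop)
    (C P : Profile n) (i : Fin n) (Pi' : Finset ℕ),
    (∀ p ∈ ℙ, c p ≤ B) → (∀ j, IsStrictTotalOrder ℕ (prefs j)) →
    (∀ j, C j ⊆ ℙ) → (∀ j, P j ⊆ C j) → Pi' ⊆ C i ∪ unionP P →
    ¬ SuccAnt U R F n c B ℙ prefs
        (Function.update P i (GREED c B (C i ∪ unionP P) (prefs i))) i Pi'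

end FSSP


/-!
Counterexample with two agents, budget `3` and projects `0, 1, 2` of costs `1, 3, 1`; everybody
ranks projects by index. Agent `0` is aware of `{1, 2}`, agent `1` of `{0}`. Truthfully agent `0`
proposes her ideal set `{1}`; whether the shortlist reaches the budget or equals `{0, 1}`, a
non-wasteful rule shortlists project `1`, so her ideal set over everything she ends up seeing is
`{0, 2}`, and any allocation out of `{0, 1}` contains at most `0` of it. Proposing `{2}` instead
yields proposals `{0, 2}` of total cost `2 < 3`: a non-wasteful rule must shortlist both and an
exhaustive rule must fund both, whatever the ballots.
-/

lemma first_eq_of_forall {r : ℕ → ℕ → Prop} (hr : ∀ a b, r a b → ¬ r b a)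
    {P : Finset ℕ} {p : ℕ} (hp : p ∈ P) (h : ∀ q ∈ P, q ≠ p → r p q) :
    first r P = p := by
  have hex : ∃ p' ∈ P, ∀ q ∈ P, q ≠ p' → r p' q := ⟨p, hp, h⟩
  rw [first, dif_pos hex]
  obtain ⟨hmem, hall⟩ := hex.choose_spec
  by_contra hne
  exact hr _ _ (hall p hp (Ne.symm hne)) (h _ hmem hne)

lemma first_lt_mem {P : Finset ℕ} (hP : P.Nonempty) : first (· < ·) P ∈ P := by
  rw [first_eq_of_forall (fun _ _ => lt_asymm) (P.min'_mem hP)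
    fun q hq hne => (P.min'_le q hq).lt_of_ne (Ne.symm hne)]
  exact P.min'_mem hP

lemma first_lt_insert {p : ℕ} {s : Finset ℕ} (h : ∀ q ∈ s, p < q) :
    first (· < ·) (insert p s) = p :=
  first_eq_of_forall (fun _ _ => lt_asymm) (mem_insert_self p s) fun q hq hne =>
    h q ((mem_insert.1 hq).resolve_left hne)

lemma greedyAux_zero (c : ℕ → ℕ) (r : ℕ → ℕ → Prop) (P : Finset ℕ) (b : ℕ) :
    greedyAux c r 0 P b = ∅ := rfl

lemma greedyAux_lt_insert (c : ℕ → ℕ) (k b : ℕ) {p : ℕ} {s : Finset ℕ}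
    (h : ∀ q ∈ s, p < q) :
    greedyAux c (· < ·) (k + 1) (insert p s) b =
      if c p ≤ b then insert p (greedyAux c (· < ·) k s (b - c p))
      else greedyAux c (· < ·) k s b := by
  have hp : p ∉ s := fun hp => lt_irrefl p (h p hp)
  rw [greedyAux, if_pos (insert_nonempty p s), first_lt_insert h, erase_insert hp]

lemma greedyAux_lt_subset (c : ℕ → ℕ) (k : ℕ) (P : Finset ℕ) (b : ℕ) :
    greedyAux c (· < ·) k P b ⊆ P := by
  induction k generalizing P b with
  | zero => exact empty_subset P
  | succ k ih =>
    rw [greedyAux]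
    split_ifs with hP
    · exact insert_subset (first_lt_mem hP) ((ih _ _).trans (erase_subset _ _))
    · exact (ih _ _).trans (erase_subset _ _)
    · exact empty_subset P

lemma GREED_lt_subset (c : ℕ → ℕ) (B : ℕ) (P : Finset ℕ) : GREED c B P (· < ·) ⊆ P :=
  greedyAux_lt_subset c _ P B

lemma Tfam_subset {𝔓 : Finset (Finset ℕ)} {S : Finset ℕ} (h : ∀ X ∈ 𝔓, X ⊆ S) :
    Tfam 𝔓 ⊆ S := by
  rw [Tfam]
  split
  next hex => exact h _ hex.choose_spec.1
  next => exact empty_subset S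

lemma ExhaustiveAlloc.eq_of_sum_le {c : ℕ → ℕ} {B : ℕ} {Sh A : Finset ℕ}
    (h : ExhaustiveAlloc c B Sh A) (hSh : Sh.sum c ≤ B) : A = Sh := by
  obtain ⟨hsub, -, hmax⟩ := h
  refine hsub.antisymm fun p hp => ?_
  by_contra hpA
  refine hmax p hp hpA ?_
  calc A.sum c + c p = (insert p A).sum c := by rw [sum_insert hpA, add_comm]
    _ ≤ Sh.sum c := sum_le_sum_of_subset (insert_subset hp hsub)
    _ ≤ B := hSh

lemma ExhaustiveRule.isAllocRule {F : AllocRule} (hF : ExhaustiveRule F) : IsAllocRule F :=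
  fun n c B Sh A hA => ⟨(hF n c B Sh A hA).1, (hF n c B Sh A hA).2.1⟩

section BestResponse

variable {U : PrefModel} {n : ℕ} {c : ℕ → ℕ} {B : ℕ} {F : AllocRule}
  {r : ℕ → ℕ → Prop} {Sh : Finset ℕ} {A : Profile n} {i : Fin n}

lemma forall_update_subset (hA : ∀ j, A j ⊆ Sh) {b : Finset ℕ} (hb : b ⊆ Sh) :
    ∀ j, Function.update A i b j ⊆ Sh :=
  Function.forall_update_iff A (p := fun _ X => X ⊆ Sh) |>.2 ⟨hb, fun j _ => hA j⟩

lemma Astar_subset (hF : IsAllocRule F) (hA : ∀ j, A j ⊆ Sh) :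
    Astar U n c B F r Sh A i ⊆ Sh := by
  refine Tfam_subset fun X hX => ?_
  obtain ⟨b, hb, rfl⟩ := mem_image.1 (mem_filter.1 hX).1
  exact (hF n c B Sh _ (forall_update_subset hA (mem_powerset.1 hb))).1

lemma Fstar_subset (hF : IsAllocRule F) (hA : ∀ j, A j ⊆ Sh) :
    Fstar U n c B F r Sh A i ⊆ Sh :=
  (hF n c B Sh _ (forall_update_subset hA (Astar_subset hF hA))).1

lemma Fstar_eq_of_sum_le (hF : ExhaustiveRule F) (hA : ∀ j, A j ⊆ Sh) (hSh : Sh.sum c ≤ B) :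
    Fstar U n c B F r Sh A i = Sh :=
  (hF n c B Sh _ (forall_update_subset hA (Astar_subset hF.isAllocRule hA))).eq_of_sum_le hSh

end BestResponse

section NonWasteful

variable {R : ShortRule} {n : ℕ} {c : ℕ → ℕ} {B : ℕ} {ℙ : Finset ℕ} {P : Profile n}

lemma NonWasteful.mem_of_sum_erase_lt (hnw : NonWasteful R) (hR : IsShortRule R)
    (hℙ : ∀ p ∈ ℙ, c p ≤ B) (hP : ∀ j, P j ⊆ ℙ) {p : ℕ} (hp : p ∈ unionP P)
    (hcost : ((unionP P).erase p).sum c < B) : p ∈ R n c B ℙ P := by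
  rcases hnw n c B ℙ P hℙ hP with hB | hunion
  · by_contra hpR
    have hsub : R n c B ℙ P ⊆ (unionP P).erase p := fun q hq =>
      mem_erase.2 ⟨fun hqp => hpR (hqp ▸ hq), hR n c B ℙ P hP hq⟩
    exact (hB.trans (sum_le_sum_of_subset hsub)).not_gt hcost
  · exact hunion ▸ hp

lemma NonWasteful.eq_unionP_of_sum_lt (hnw : NonWasteful R) (hR : IsShortRule R)
    (hℙ : ∀ p ∈ ℙ, c p ≤ B) (hP : ∀ j, P j ⊆ ℙ) (hcost : (unionP P).sum c < B) :
    R n c B ℙ P = unionP P :=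
  (hR n c B ℙ P hP).antisymm fun _ hp =>
    hnw.mem_of_sum_erase_lt hR hℙ hP hp ((sum_le_sum_of_subset (erase_subset _ _)).trans_lt hcost)

end NonWasteful

lemma utility_lt_of_ssubset {U : PrefModel} (hU : U = overlapU ∨ U = costU) {c : ℕ → ℕ}
    (hc : ∀ p, 0 < c p) {T X Y : Finset ℕ} (h : X ∩ T ⊂ Y ∩ T) : U c T X < U c T Y := by
  rcases hU with rfl | rfl
  · exact card_lt_card h
  · obtain ⟨p, hpY, hpX⟩ := exists_of_ssubset h
    exact sum_lt_sum_of_subset h.subset hpY hpX (hc p) fun _ _ _ => Nat.zero_le _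

lemma succAnt_of_sum_le {U : PrefModel} {R : ShortRule} {F : AllocRule} {n : ℕ} {c : ℕ → ℕ}
    {B : ℕ} {ℙ : Finset ℕ} {P : Profile n} {i : Fin n} {Pi' : Finset ℕ}
    (hF : ExhaustiveRule F)
    (hSh' : (R n c B ℙ (Function.update P i Pi')).sum c ≤ B)
    (hlt : ∀ X ⊆ R n c B ℙ P,
      U c (GREED c B (R n c B ℙ P ∪ R n c B ℙ (Function.update P i Pi')) (· < ·)) X <
        U c (GREED c B (R n c B ℙ P ∪ R n c B ℙ (Function.update P i Pi')) (· < ·))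
          (R n c B ℙ (Function.update P i Pi'))) :
    SuccAnt U R F n c B ℙ (fun _ => (· < ·)) P i Pi' := by
  simp only [SuccAnt]
  rw [Fstar_eq_of_sum_le hF (fun _ => GREED_lt_subset _ _ _) hSh']
  exact hlt _ (Fstar_subset hF.isAllocRule fun _ => GREED_lt_subset _ _ _)

def costEx : ℕ → ℕ := fun p => if p = 1 then 3 else 1

lemma costEx_pos (p : ℕ) : 0 < costEx p := by
  unfold costEx
  split <;> norm_num

lemma GREED_costEx_aware : GREED costEx 3 {1, 2} (· < ·) = {1} := by
  rw [GREED, ← insert_empty (a := 2),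
    show #(insert 1 (insert 2 ∅) : Finset ℕ) = 1 + 1 from rfl]
  simp (disch := decide) only [greedyAux_lt_insert, greedyAux_zero]
  decide

lemma GREED_costEx_all : GREED costEx 3 {0, 1, 2} (· < ·) = {0, 2} := by
  rw [GREED, ← insert_empty (a := 2),
    show #(insert 0 (insert 1 (insert 2 ∅)) : Finset ℕ) = 2 + 1 from rfl]
  simp (disch := decide) only [greedyAux_lt_insert, greedyAux_zero]
  decide

/-- Under both preference models, no pair of a non-wasteful
shortlisting rule and an exhaustive allocation rule is R-FSSP-A. -/
theorem no_nonWasteful_exhaustive_rfsspA :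
    ∀ U : PrefModel, (U = overlapU ∨ U = costU) →
    ∀ (R : ShortRule) (F : AllocRule),
      IsShortRule R → NonWasteful R → ExhaustiveRule F → ¬ R_FSSP_A U R F := by
  intro U hU R F hR hnw hF hsp
  set P : Profile 2 := ![{1}, {0}]
  set Sh := R 2 costEx 3 {0, 1, 2} P
  set Sh' := R 2 costEx 3 {0, 1, 2} (Function.update P 0 {2})
  have hℙ : ∀ p ∈ ({0, 1, 2} : Finset ℕ), costEx p ≤ 3 := by decide
  have hSh : Sh ⊆ {0, 1} := (hR 2 costEx 3 {0, 1, 2} P (by decide)).trans (by decide)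
  have h1 : 1 ∈ Sh := hnw.mem_of_sum_erase_lt hR hℙ (by decide) (by decide) (by decide)
  have hSh' : Sh' = {0, 2} :=
    (hnw.eq_unionP_of_sum_lt hR hℙ (by decide) (by decide)).trans (by decide)
  have hunion : Sh ∪ Sh' = {0, 1, 2} := by
    rw [hSh']
    exact (union_subset (hSh.trans (by decide)) (by decide)).antisymm
      (by simp [insert_subset_iff, h1])
  refine hsp 2 costEx 3 {0, 1, 2} (fun _ => (· < ·)) ![{1, 2}, {0}] P 0 {2} hℙ
    (fun _ => inferInstance) (by decide) (by decide) (by decide) ?_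
  rw [Function.update_eq_self_iff.2 GREED_costEx_aware]
  refine succAnt_of_sum_le hF (show Sh'.sum costEx ≤ 3 by rw [hSh']; decide) fun X hX => ?_
  change U costEx (GREED costEx 3 (Sh ∪ Sh') (· < ·)) X < U costEx _ Sh'
  rw [hunion, GREED_costEx_all, hSh']
  have hX0 : X ∩ {0, 2} ⊆ {0} :=
    (inter_subset_inter (hX.trans hSh) subset_rfl).trans (by decide)
  exact utility_lt_of_ssubset hU costEx_pos (hX0.trans_ssubset (by decide))

end PB
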